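/- Continuity of the Kalman gain in the covariance: let Γ ∈ ℝ^{m×m} be symmetric positive definite with smallest eigenvalue γ_min, H ∈ ℝ^{m×d}, C ∈ ℝ^{d×d} symmetric positive semidefinite with gain K = CH^T(HCH^T + Γ)^{-1}, and let C^{ML} be any symmetric d×d matrix with positive-part truncation C̃^{ML} and multilevel gain K^{ML} = C^{ML}H^T(HC̃^{ML}H^T + Γ)^{-1}. Then |K - K^{ML}| ≤ (|H|/γ_min)(1 + 2|KH|) |C - C^{ML}|. -/

import Mathlib

open scoped Matrix

noncomputable def opNorm {m n : ℕ} (A : Matrix (Fin m) (Fin n) ℝ) : ℝ :=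
  ‖LinearMap.toContinuousLinearMap (Matrix.toEuclideanLin A)‖

/-!
Write `S = HCHᵀ + Γ` and `S̃ = HC̃Hᵀ + Γ`. The resolvent identity `S⁻¹ - S̃⁻¹ = S⁻¹ (S̃ - S) S̃⁻¹`
gives the exact factorisation `K - K^ML = (C - C^ML + KH (C̃ - C)) Hᵀ S̃⁻¹`. Since `C̃` is positive
semidefinite, `S̃ ≥ Γ ≥ γ_min`, so `|S̃⁻¹| ≤ 1/γ_min`. Finally `|C̃ - C| ≤ 2 |C - C^ML|`: the
truncation only removes eigenvalues `λ ≤ 0` of `C^ML`, and for the corresponding unit eigenvector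
`u` the positivity of `C` gives `-λ ≤ uᵀ (C - C^ML) u ≤ |C - C^ML|`.
-/

open scoped ComplexOrder Matrix.Norms.L2Operator

namespace Matrix

section L2OpNorm

variable {𝕜 : Type*} [RCLike 𝕜] {m n : Type*} [Fintype m] [Fintype n] [DecidableEq n]

lemma norm_apply_le_l2_opNorm (A : Matrix m n 𝕜) (i : m) (j : n) : ‖A i j‖ ≤ ‖A‖ :=
  calc ‖A i j‖ = ‖(WithLp.toLp 2 (A *ᵥ Pi.single j 1) : EuclideanSpace 𝕜 m) i‖ := by simp
    _ ≤ ‖(WithLp.toLp 2 (A *ᵥ Pi.single j 1) : EuclideanSpace 𝕜 m)‖ := PiLp.norm_apply_le _ _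
    _ ≤ ‖A‖ * ‖(EuclideanSpace.single j 1 : EuclideanSpace 𝕜 n)‖ := by
        simpa using l2_opNorm_mulVec A (EuclideanSpace.single j 1)
    _ = ‖A‖ := by simp

lemma l2_opNorm_unitary_conj {U : Matrix n n 𝕜} (hU : U ∈ unitary (Matrix n n 𝕜))
    (A : Matrix n n 𝕜) : ‖U * A * star U‖ = ‖A‖ := by
  rw [CStarRing.norm_mul_mem_unitary _ (Unitary.star_mem hU), CStarRing.norm_mem_unitary_mul _ hU]

lemma IsHermitian.posSemidef_sub_smul_one_of_le_eigenvalues {A : Matrix n n 𝕜}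
    (hA : A.IsHermitian) {γ : ℝ} (hγ : ∀ i, γ ≤ hA.eigenvalues i) : (A - γ • 1).PosSemidef := by
  have hD : diagonal (RCLike.ofReal ∘ (hA.eigenvalues - fun _ => γ))
      = diagonal (RCLike.ofReal ∘ hA.eigenvalues) - γ • (1 : Matrix n n 𝕜) := by
    ext i j
    rcases eq_or_ne i j with rfl | hij <;> simp [*, Algebra.algebraMap_eq_smul_one]
  have hdiag : (diagonal (RCLike.ofReal ∘ hA.eigenvalues) - γ • 1 : Matrix n n 𝕜).PosSemidef :=
    hD ▸ PosSemidef.diagonal fun i => by simpa [RCLike.ofReal_nonneg] using hγ i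
  convert hdiag.mul_mul_conjTranspose_same (hA.eigenvectorUnitary : Matrix n n 𝕜) using 1
  rw [mul_sub, sub_mul, mul_smul_comm, smul_mul_assoc, mul_one, ← star_eq_conjTranspose,
    Unitary.mul_star_self_of_mem hA.eigenvectorUnitary.2]
  exact congrArg (· - γ • 1) hA.spectral_theorem

end L2OpNorm

section Real

lemma PosSemidef.mul_mul_transpose_same {m n : Type*} [Fintype m] [Fintype n] {A : Matrix n n ℝ}
    (hA : A.PosSemidef) (B : Matrix m n ℝ) : (B * A * Bᵀ).PosSemidef := by
  simpa only [conjTranspose_eq_transpose_of_trivial] using hA.mul_mul_conjTranspose_same B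

variable {n : Type*} [Fintype n] [DecidableEq n]

lemma l2_opNorm_inv_le {M : Matrix n n ℝ} {γ : ℝ} (hγ : 0 < γ) (hM : (M - γ • 1).PosSemidef) :
    ‖M⁻¹‖ ≤ γ⁻¹ := by
  have hMinv : M * M⁻¹ = 1 := by
    refine M.mul_nonsing_inv (M.isUnit_iff_isUnit_det.mp ?_)
    simpa using (PosDef.posSemidef_add hM (PosDef.one.smul hγ)).isUnit
  have hlower (x : EuclideanSpace ℝ n) : γ * ‖x‖ ≤ ‖toEuclideanCLM (𝕜 := ℝ) M x‖ := by
    have hquad : γ * ‖x‖ ^ 2 ≤ inner ℝ x (toEuclideanCLM (𝕜 := ℝ) M x) :=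
      calc γ * ‖x‖ ^ 2 = x.ofLp ⬝ᵥ ((γ • 1 : Matrix n n ℝ) *ᵥ x.ofLp) := by
            rw [← real_inner_self_eq_norm_sq, smul_mulVec, one_mulVec, dotProduct_smul,
              EuclideanSpace.inner_eq_star_dotProduct, smul_eq_mul]
            simp
        _ ≤ x.ofLp ⬝ᵥ (M *ᵥ x.ofLp) := by
            simpa [sub_mulVec] using hM.dotProduct_mulVec_nonneg x.ofLp
        _ = inner ℝ x (toEuclideanCLM (𝕜 := ℝ) M x) := by
            simp [EuclideanSpace.inner_eq_star_dotProduct, dotProduct_comm]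
    have hcs := real_inner_le_norm x (toEuclideanCLM (𝕜 := ℝ) M x)
    rcases (norm_nonneg x).eq_or_lt with hx | hx
    · rw [← hx, mul_zero]; positivity
    · nlinarith
  refine ContinuousLinearMap.opNorm_le_bound _ (inv_nonneg.mpr hγ.le) fun y => ?_
  have hy : toEuclideanCLM (𝕜 := ℝ) M (toEuclideanCLM (𝕜 := ℝ) M⁻¹ y) = y := by
    rw [← mul_apply_eq_comp, ← map_mul, hMinv, map_one, one_apply_eq_self]
  rw [inv_mul_eq_div, le_div_iff₀' hγ]
  exact (hlower _).trans_eq (congrArg norm hy)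

lemma neg_apply_self_le_l2_opNorm_sub {C : Matrix n n ℝ} (hC : C.PosSemidef) (A : Matrix n n ℝ)
    (k : n) : -A k k ≤ ‖C - A‖ :=
  calc -A k k ≤ (C - A) k k := by simpa using hC.diag_nonneg (i := k)
    _ ≤ ‖(C - A) k k‖ := Real.le_norm_self _
    _ ≤ ‖C - A‖ := norm_apply_le_l2_opNorm _ k k

lemma l2_opNorm_sub_posPart_le {U : Matrix n n ℝ} (hU : U ∈ unitary (Matrix n n ℝ)) (v : n → ℝ)
    {C : Matrix n n ℝ} (hC : C.PosSemidef) :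
    ‖star U * diagonal v * U - star U * diagonal (fun k => (v k)⁺) * U‖
      ≤ ‖C - star U * diagonal v * U‖ := by
  rw [← Matrix.sub_mul, ← Matrix.mul_sub, diagonal_sub, CStarRing.norm_mul_mem_unitary _ hU,
    CStarRing.norm_mem_unitary_mul _ (Unitary.star_mem hU), l2_opNorm_diagonal]
  refine pi_norm_le_iff_of_nonneg (norm_nonneg _) |>.mpr fun k => ?_
  by_cases hk : 0 ≤ v k
  · simp [hk]
  have hconj : U * (star U * diagonal v * U) * star U = diagonal v := by
    simp only [← mul_assoc, Unitary.mul_star_self_of_mem hU, one_mul]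
    simp only [mul_assoc, Unitary.mul_star_self_of_mem hU, mul_one]
  have hCconj : (U * C * star U).PosSemidef := by
    simpa only [star_eq_conjTranspose] using hC.mul_mul_conjTranspose_same U
  calc ‖v k - (v k)⁺‖ = -v k := by
        simp [posPart_eq_zero.mpr (not_le.mp hk).le, abs_of_neg (not_le.mp hk)]
    _ = -(U * (star U * diagonal v * U) * star U) k k := by rw [hconj, diagonal_apply_eq]
    _ ≤ ‖U * C * star U - U * (star U * diagonal v * U) * star U‖ :=
        neg_apply_self_le_l2_opNorm_sub hCconj _ k
    _ = ‖C - star U * diagonal v * U‖ := by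
        rw [← Matrix.sub_mul, ← Matrix.mul_sub, l2_opNorm_unitary_conj hU]

lemma sum_smul_vecMulVec_self {R : Type*} [CommSemiring R] (q : n → n → R) (v : n → R) :
    ∑ k, v k • vecMulVec (q k) (q k) = (of q)ᵀ * diagonal v * of q := by
  ext i j
  rw [mul_apply]
  simp only [sum_apply, smul_apply, vecMulVec_apply, mul_diagonal, transpose_apply, of_apply,
    smul_eq_mul]
  exact Finset.sum_congr rfl fun _ _ => by ring

lemma sum_filter_pos_smul_vecMulVec_self (q : n → n → ℝ) (v : n → ℝ) :
    ∑ k ∈ Finset.univ.filter (fun k => 0 < v k), v k • vecMulVec (q k) (q k)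
      = (of q)ᵀ * diagonal (fun k => (v k)⁺) * of q := by
  rw [← sum_smul_vecMulVec_self, Finset.sum_filter]
  refine Finset.sum_congr rfl fun k _ => ?_
  by_cases hk : 0 < v k
  · simp [hk, hk.le]
  · simp [hk, not_lt.mp hk]

lemma of_mem_unitary_of_orthonormal {q : n → n → ℝ}
    (horth : ∀ k l, q k ⬝ᵥ q l = if k = l then (1 : ℝ) else 0) :
    of q ∈ unitary (Matrix n n ℝ) := by
  refine mem_unitaryGroup_iff.mpr ?_
  ext k l
  simpa [mul_apply, one_apply, dotProduct] using horth k l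

end Real

lemma kalman_gain_sub_eq {R : Type*} [CommRing R] {m n : Type*} [Fintype m] [Fintype n]
    [DecidableEq m] (H : Matrix m n R) (Γ : Matrix m m R) (C C' Ct : Matrix n n R)
    (hS : IsUnit (H * C * Hᵀ + Γ)) (hSt : IsUnit (H * Ct * Hᵀ + Γ)) :
    C * Hᵀ * (H * C * Hᵀ + Γ)⁻¹ - C' * Hᵀ * (H * Ct * Hᵀ + Γ)⁻¹
      = (C - C' + C * Hᵀ * (H * C * Hᵀ + Γ)⁻¹ * H * (Ct - C)) * Hᵀ * (H * Ct * Hᵀ + Γ)⁻¹ := by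
  set S := H * C * Hᵀ + Γ
  set St := H * Ct * Hᵀ + Γ
  have hdiff : St - S = H * (Ct - C) * Hᵀ := by
    rw [add_sub_add_right_eq_sub, ← Matrix.sub_mul, ← Matrix.mul_sub]
  calc C * Hᵀ * S⁻¹ - C' * Hᵀ * St⁻¹ = (C - C') * Hᵀ * St⁻¹ + C * Hᵀ * (S⁻¹ - St⁻¹) := by
        rw [Matrix.sub_mul, Matrix.sub_mul, Matrix.mul_sub]; abel
    _ = (C - C') * Hᵀ * St⁻¹ + C * Hᵀ * (S⁻¹ * (H * (Ct - C) * Hᵀ) * St⁻¹) := by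
        rw [inv_sub_inv (iff_of_true hS hSt), hdiff]
    _ = _ := by simp only [Matrix.add_mul, Matrix.mul_assoc]

lemma l2_opNorm_kalman_gain_sub_le {m n : Type*} [Fintype m] [Fintype n] [DecidableEq m]
    [DecidableEq n]
    (H : Matrix m n ℝ) (Γ : Matrix m m ℝ) (C C' Ct : Matrix n n ℝ)
    (hS : IsUnit (H * C * Hᵀ + Γ)) (hSt : IsUnit (H * Ct * Hᵀ + Γ)) {γ : ℝ}
    (hSt_inv : ‖(H * Ct * Hᵀ + Γ)⁻¹‖ ≤ γ⁻¹) (htrunc : ‖C' - Ct‖ ≤ ‖C - C'‖) :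
    ‖C * Hᵀ * (H * C * Hᵀ + Γ)⁻¹ - C' * Hᵀ * (H * Ct * Hᵀ + Γ)⁻¹‖
      ≤ ‖H‖ / γ * (1 + 2 * ‖C * Hᵀ * (H * C * Hᵀ + Γ)⁻¹ * H‖) * ‖C - C'‖ := by
  set K := C * Hᵀ * (H * C * Hᵀ + Γ)⁻¹
  have hHt : ‖Hᵀ‖ = ‖H‖ := by
    rw [← conjTranspose_eq_transpose_of_trivial, l2_opNorm_conjTranspose]
  have hCt : ‖Ct - C‖ ≤ 2 * ‖C - C'‖ :=
    calc ‖Ct - C‖ ≤ ‖Ct - C'‖ + ‖C' - C‖ := norm_sub_le_norm_sub_add_norm_sub _ _ _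
      _ ≤ 2 * ‖C - C'‖ := by rw [norm_sub_rev Ct C', norm_sub_rev C' C]; linarith
  rw [kalman_gain_sub_eq H Γ C C' Ct hS hSt]
  calc ‖(C - C' + K * H * (Ct - C)) * Hᵀ * (H * Ct * Hᵀ + Γ)⁻¹‖
      ≤ ‖C - C' + K * H * (Ct - C)‖ * ‖Hᵀ‖ * ‖(H * Ct * Hᵀ + Γ)⁻¹‖ :=
        (l2_opNorm_mul _ _).trans (by gcongr; exact l2_opNorm_mul _ _)
    _ ≤ (‖C - C'‖ + ‖K * H‖ * (2 * ‖C - C'‖)) * ‖H‖ * γ⁻¹ := by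
        rw [hHt]
        gcongr
        exact (norm_add_le _ _).trans (by gcongr; exact (l2_opNorm_mul _ _).trans (by gcongr))
    _ = ‖H‖ / γ * (1 + 2 * ‖K * H‖) * ‖C - C'‖ := by ring

end Matrix

theorem gain_continuity_general {m d : ℕ}
    (Γ : Matrix (Fin m) (Fin m) ℝ) (hΓ : Γ.PosDef)
    (γmin : ℝ) (hγpos : 0 < γmin)
    (hγmin : IsLeast (Set.range hΓ.1.eigenvalues) γmin)
    (H : Matrix (Fin m) (Fin d) ℝ)
    (C CML CMLtil : Matrix (Fin d) (Fin d) ℝ)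
    (hC : C.PosSemidef)
    (lam : Fin d → ℝ) (q : Fin d → (Fin d → ℝ))
    (horth : ∀ k l, q k ⬝ᵥ q l = if k = l then (1 : ℝ) else 0)
    (hdecomp : CML = ∑ k, lam k • Matrix.vecMulVec (q k) (q k))
    (htrunc : CMLtil = ∑ k ∈ Finset.univ.filter (fun k => 0 < lam k),
      lam k • Matrix.vecMulVec (q k) (q k))
    (K KML : Matrix (Fin d) (Fin m) ℝ)
    (hK : K = C * Hᵀ * (H * C * Hᵀ + Γ)⁻¹)
    (hKML : KML = CML * Hᵀ * (H * CMLtil * Hᵀ + Γ)⁻¹) :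
    opNorm (K - KML) ≤ opNorm H / γmin * (1 + 2 * opNorm (K * H)) * opNorm (C - CML) := by
  set Q := Matrix.of q
  have hQ : Q ∈ unitary (Matrix (Fin d) (Fin d) ℝ) := Matrix.of_mem_unitary_of_orthonormal horth
  have hQt : Qᵀ = star Q := (Matrix.conjTranspose_eq_transpose_of_trivial Q).symm
  have hCML : CML = star Q * Matrix.diagonal lam * Q := by
    rw [hdecomp, Matrix.sum_smul_vecMulVec_self, hQt]
  have hCMLtil : CMLtil = star Q * Matrix.diagonal (fun k => (lam k)⁺) * Q := by
    rw [htrunc, Matrix.sum_filter_pos_smul_vecMulVec_self, hQt]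
  have hCMLtil_psd : CMLtil.PosSemidef := by
    rw [hCMLtil, Matrix.star_eq_conjTranspose]
    exact (Matrix.PosSemidef.diagonal fun k => posPart_nonneg (lam k)).conjTranspose_mul_mul_same Q
  have htrunc_le : ‖CML - CMLtil‖ ≤ ‖C - CML‖ := by
    rw [hCMLtil, hCML]
    exact Matrix.l2_opNorm_sub_posPart_le hQ lam hC
  have hHCtH := hCMLtil_psd.mul_mul_transpose_same H
  have hSt_inv : ‖(H * CMLtil * Hᵀ + Γ)⁻¹‖ ≤ γmin⁻¹ := by
    refine Matrix.l2_opNorm_inv_le hγpos ?_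
    rw [add_sub_assoc]
    exact hHCtH.add (hΓ.1.posSemidef_sub_smul_one_of_le_eigenvalues fun i => hγmin.2 ⟨i, rfl⟩)
  have hS := (Matrix.PosDef.posSemidef_add (hC.mul_mul_transpose_same H) hΓ).isUnit
  have hSt := (Matrix.PosDef.posSemidef_add hHCtH hΓ).isUnit
  subst hK hKML
  exact Matrix.l2_opNorm_kalman_gain_sub_le H Γ C CML CMLtil hS hSt hSt_inv htrunc_le

/-- continuity of the Kalman gain in the covariance:
|K - K^ML| ≤ (|H|/γmin)(1 + 2|KH|) |C - C^ML|. -/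
theorem gain_continuity {m d : ℕ}
    (Γ : Matrix (Fin m) (Fin m) ℝ) (hΓ : Γ.PosDef)
    (γmin : ℝ) (hγpos : 0 < γmin)
    (hγmin : IsLeast (Set.range hΓ.1.eigenvalues) γmin)
    (H : Matrix (Fin m) (Fin d) ℝ)
    (C CML CMLtil : Matrix (Fin d) (Fin d) ℝ)
    (hC : C.PosSemidef) (hCML : CML.IsSymm)
    (lam : Fin d → ℝ) (q : Fin d → (Fin d → ℝ))
    (horth : ∀ k l, q k ⬝ᵥ q l = if k = l then (1 : ℝ) else 0)
    (hdecomp : CML = ∑ k, lam k • Matrix.vecMulVec (q k) (q k))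
    (htrunc : CMLtil = ∑ k ∈ Finset.univ.filter (fun k => 0 < lam k),
      lam k • Matrix.vecMulVec (q k) (q k))
    (K KML : Matrix (Fin d) (Fin m) ℝ)
    (hK : K = C * Hᵀ * (H * C * Hᵀ + Γ)⁻¹)
    (hKML : KML = CML * Hᵀ * (H * CMLtil * Hᵀ + Γ)⁻¹) :
    opNorm (K - KML) ≤ opNorm H / γmin * (1 + 2 * opNorm (K * H)) * opNorm (C - CML) :=
  gain_continuity_general Γ hΓ γmin hγpos hγmin H C CML CMLtil hC lam q horth hdecomp htrunc K KML
    hK hKML
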